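/- arXiv:2203.15717 — 2 statements merged into one kernel-verified Lean document; each statement's English description precedes it below -/
import Mathlib

section
/- Limit of the Radon–Nikodym derivative between drifted and massive walks on the triangular lattice (Corollary 2.5 of the paper): Fix c₁, c₂, c₃ ∈ ℝ and set Δ = (c₁ + c₂·τ + c₃·τ²)/3. For δ > 0 small enough that 1 + c_k·δ > 0 for all k, set a_k(δ) = 1 + c_k·δ and a(δ) = a₁(δ) + a₂(δ) + a₃(δ). Let (δ_j) be a sequence of positive reals tending to 0, and for each j let γ^j = (x₀^j, …, x_{n_j}^j) be a path of length n_j in the directed triangular lattice of mesh δ_j, with starting points x₀^j → z ∈ ℂ and endpoints x_{n_j}^j → y ∈ ℂ. Then the ratio (∏_{s<n_j} a_{k_s}(δ_j)/a(δ_j)) / ((a₁(δ_j)·a₂(δ_j)·a₃(δ_j))^{1/3}/a(δ_j))^{n_j} converges to exp(2·⟨y − z, Δ⟩) as j → ∞. -/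
open Finset Filter

/-- The primitive third root of unity `τ = e^{2πi/3}`. -/
noncomputable def triTau : ℂ := Complex.exp (2 * Real.pi * Complex.I / 3)

/-- The real inner product `⟨z, w⟩ = Re (z · conj w)` on `ℂ`. -/
noncomputable def cinner (z w : ℂ) : ℝ := (z * (starRingEnd ℂ) w).re

/-!
Taking logarithms, the ratio is `exp (∑ₛ (log a_{kₛ} - (1/3) ∑ᵢ log aᵢ))`. Since `1, τ, τ²` are
unit vectors with pairwise inner products `-1/2`, we have
`b_m - (1/3) ∑ᵢ bᵢ = (2/3) ∑ᵢ ⟨τ^m, τ^i⟩ bᵢ`, so the exponent depends on the path only through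
its displacement `x_n - x_0 = δ ∑ₛ τ^{kₛ}`: it equals
`(2/3) ∑ᵢ ⟨x_n - x_0, τ^i⟩ log (1 + cᵢ δ) / δ`, which tends to `(2/3) ∑ᵢ ⟨y - z, τ^i⟩ cᵢ = 2 ⟨y - z, Δ⟩`.
-/

lemma cinner_eq_inner (z w : ℂ) : cinner z w = inner ℝ z w := by
  rw [real_inner_comm, Complex.inner, cinner]

lemma cinner_ofReal_mul_left (r : ℝ) (z w : ℂ) : cinner (r * z) w = r * cinner z w := by
  rw [cinner, mul_assoc, Complex.re_ofReal_mul, cinner]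

lemma cinner_sum_left {ι : Type*} (s : Finset ι) (f : ι → ℂ) (w : ℂ) :
    cinner (∑ i ∈ s, f i) w = ∑ i ∈ s, cinner (f i) w := by
  simp_rw [cinner_eq_inner, sum_inner]

lemma continuous_cinner_left (w : ℂ) : Continuous fun z => cinner z w := by
  simp only [cinner_eq_inner]
  exact continuous_id.inner continuous_const

lemma triTau_eq : triTau = ⟨-(1 / 2), √3 / 2⟩ := by
  have h : 2 * Real.pi * Complex.I / 3 = ((Real.pi - Real.pi / 3 : ℝ) : ℂ) * Complex.I := by
    push_cast; ring
  apply Complex.ext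
  · rw [triTau, h, Complex.exp_ofReal_mul_I_re, Real.cos_pi_sub, Real.cos_pi_div_three]
  · rw [triTau, h, Complex.exp_ofReal_mul_I_im, Real.sin_pi_sub, Real.sin_pi_div_three]

lemma cinner_triTau_pow (a b : Fin 3) :
    cinner (triTau ^ (a : ℕ)) (triTau ^ (b : ℕ)) = if a = b then 1 else -(1 / 2) := by
  have h3 : √3 * √3 = 3 := Real.mul_self_sqrt (by norm_num)
  fin_cases a <;> fin_cases b <;>
    simp [cinner, triTau_eq, sq] <;> nlinarith [h3]

lemma sum_cinner_triTau_pow_mul (m : Fin 3) (b : Fin 3 → ℝ) :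
    ∑ i : Fin 3, 2 / 3 * cinner (triTau ^ (m : ℕ)) (triTau ^ (i : ℕ)) * b i
      = b m - 1 / 3 * ∑ i, b i := by
  have hcoef (i : Fin 3) :
      2 / 3 * cinner (triTau ^ (m : ℕ)) (triTau ^ (i : ℕ)) = (if m = i then 1 else 0) - 1 / 3 := by
    rw [cinner_triTau_pow]; split_ifs <;> norm_num
  simp only [hcoef, sub_mul, ite_mul, one_mul, zero_mul, sum_sub_distrib, sum_ite_eq, mem_univ,
    if_true, mul_sum]

lemma two_mul_cinner_eq_sum_cinner_triTau_pow (c : Fin 3 → ℝ) (w : ℂ) :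
    2 * cinner w (((c 0 : ℂ) + (c 1 : ℂ) * triTau + (c 2 : ℂ) * triTau ^ 2) / 3)
      = ∑ i : Fin 3, 2 / 3 * cinner w (triTau ^ (i : ℕ)) * c i := by
  have hΔ : ((c 0 : ℂ) + (c 1 : ℂ) * triTau + (c 2 : ℂ) * triTau ^ 2) / 3
      = ∑ i : Fin 3, (c i / 3) • triTau ^ (i : ℕ) := by
    simp [Fin.sum_univ_three, Complex.real_smul]; ring
  simp_rw [hΔ, cinner_eq_inner, inner_sum, real_inner_smul_right, mul_sum]
  exact sum_congr rfl fun i _ => by ring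

lemma sub_eq_ofReal_mul_sum_of_steps {δ : ℝ} {n : ℕ} {x : ℕ → ℂ} {k : ℕ → Fin 3}
    (hx : ∀ s < n, x (s + 1) - x s = δ * triTau ^ (k s : ℕ)) :
    x n - x 0 = δ * ∑ s ∈ range n, triTau ^ (k s : ℕ) := by
  rw [mul_sum, ← sum_range_sub]
  exact sum_congr rfl fun s hs => hx s (mem_range.mp hs)

lemma sum_range_sub_mean_eq_sum_cinner (n : ℕ) (k : ℕ → Fin 3) (b : Fin 3 → ℝ) :
    ∑ s ∈ range n, (b (k s) - 1 / 3 * ∑ i, b i)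
      = ∑ i : Fin 3,
          2 / 3 * cinner (∑ s ∈ range n, triTau ^ (k s : ℕ)) (triTau ^ (i : ℕ)) * b i := by
  refine (sum_congr rfl fun s _ => (sum_cinner_triTau_pow_mul (k s) b).symm).trans ?_
  rw [sum_comm]
  simp_rw [cinner_sum_left, mul_sum, sum_mul]

lemma prod_div_div_rpow_pow_eq_exp {ι : Type*} [Fintype ι] {a : ι → ℝ} (ha : ∀ i, 0 < a i)
    {A : ℝ} (hA : A ≠ 0) (r : ℝ) (n : ℕ) (k : ℕ → ι) :
    (∏ s ∈ range n, a (k s) / A) / ((∏ i, a i) ^ r / A) ^ n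
      = Real.exp (∑ s ∈ range n, (Real.log (a (k s)) - r * ∑ i, Real.log (a i))) := by
  rw [prod_div_distrib, prod_const, card_range, div_pow,
    div_div_div_cancel_right₀ (pow_ne_zero n hA), sum_sub_distrib, sum_const, card_range,
    nsmul_eq_mul, Real.exp_sub, Real.exp_sum, ← Real.log_prod (fun i _ => (ha i).ne'),
    Real.rpow_def_of_pos (prod_pos fun i _ => ha i), ← Real.exp_nat_mul, mul_comm r]
  simp only [Real.exp_log, ha]

lemma eq_mul_dslope_of_map_zero {𝕜 : Type*} [NontriviallyNormedField 𝕜] {f : 𝕜 → 𝕜}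
    (hf : f 0 = 0) (t : 𝕜) : f t = t * dslope f 0 t := by
  simpa using (sub_smul_dslope_of_zero hf t).symm

lemma HasDerivAt.tendsto_dslope {𝕜 E : Type*} [NontriviallyNormedField 𝕜]
    [NormedAddCommGroup E] [NormedSpace 𝕜 E] {f : 𝕜 → E} {f' : E} {a : 𝕜}
    (hf : HasDerivAt f f' a) : Tendsto (dslope f a) (nhds a) (nhds f') := by
  have hcont := continuousAt_dslope_same.mpr hf.differentiableAt
  rwa [ContinuousAt, dslope_same, hf.deriv] at hcont

lemma hasDerivAt_log_one_add_mul (c : ℝ) :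
    HasDerivAt (fun t => Real.log (1 + c * t)) c 0 := by
  simpa using (((hasDerivAt_id (0 : ℝ)).const_mul c).const_add 1).log (by simp)

theorem drifted_massive_RN_limit_general
    (c : Fin 3 → ℝ) (z y : ℂ)
    (δ : ℕ → ℝ)
    (hδ0 : Tendsto δ atTop (nhds 0))
    (hpos : ∀ j i, 0 < 1 + c i * δ j)
    (n : ℕ → ℕ) (x : ℕ → ℕ → ℂ) (k : ℕ → ℕ → Fin 3)
    (hpath : ∀ j, ∀ s < n j, x j (s + 1) - x j s = (δ j : ℂ) * triTau ^ (k j s : ℕ))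
    (hz : Tendsto (fun j => x j 0) atTop (nhds z))
    (hy : Tendsto (fun j => x j (n j)) atTop (nhds y)) :
    Tendsto
      (fun j =>
        (∏ s ∈ Finset.range (n j), (1 + c (k j s) * δ j) / (∑ i : Fin 3, (1 + c i * δ j)))
          / (((∏ i : Fin 3, (1 + c i * δ j)) ^ ((1 : ℝ) / 3)
                / (∑ i : Fin 3, (1 + c i * δ j))) ^ (n j)))
      atTop
      (nhds (Real.exp (2 * cinner (y - z)
        (((c 0 : ℂ) + (c 1 : ℂ) * triTau + (c 2 : ℂ) * triTau ^ 2) / 3)))) := by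
  set L : Fin 3 → ℝ → ℝ := fun i => dslope (fun t => Real.log (1 + c i * t)) 0
  have hexponent : Tendsto
      (fun j => ∑ i : Fin 3, 2 / 3 * cinner (x j (n j) - x j 0) (triTau ^ (i : ℕ)) * L i (δ j))
      atTop (nhds (∑ i : Fin 3, 2 / 3 * cinner (y - z) (triTau ^ (i : ℕ)) * c i)) :=
    tendsto_finsetSum _ fun i _ =>
      ((((continuous_cinner_left _).tendsto _).comp (hy.sub hz)).const_mul _).mul
        ((hasDerivAt_log_one_add_mul (c i)).tendsto_dslope.comp hδ0)
  rw [two_mul_cinner_eq_sum_cinner_triTau_pow]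
  refine ((Real.continuous_exp.tendsto _).comp hexponent).congr fun j => ?_
  have hA : ∑ i : Fin 3, (1 + c i * δ j) ≠ 0 :=
    (sum_pos (fun i _ => hpos j i) univ_nonempty).ne'
  rw [Function.comp_apply, prod_div_div_rpow_pow_eq_exp (hpos j) hA,
    sum_range_sub_mean_eq_sum_cinner _ _ fun i => Real.log (1 + c i * δ j),
    sub_eq_ofReal_mul_sum_of_steps (hpath j)]
  refine congrArg Real.exp (sum_congr rfl fun i _ => ?_)
  rw [cinner_ofReal_mul_left,
    eq_mul_dslope_of_map_zero (f := fun t => Real.log (1 + c i * t)) (by simp)]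
  ring

/-- **Limit of the Radon–Nikodym derivative between the drifted and the massive walk on
the triangular lattice** (Corollary 2.5). Along any sequence of paths of mesh `δ_j → 0`
whose starting points converge to `z` and whose endpoints converge to `y`, the ratio of
the drifted path weight to the massive path weight converges to `exp(2⟨y - z, Δ⟩)`,
where `Δ = (c₁ + c₂τ + c₃τ²)/3`. -/
theorem drifted_massive_RN_limit
    (c : Fin 3 → ℝ) (z y : ℂ)
    (δ : ℕ → ℝ) (hδpos : ∀ j, 0 < δ j)
    (hδ0 : Tendsto δ atTop (nhds 0))
    (hpos : ∀ j i, 0 < 1 + c i * δ j)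
    (n : ℕ → ℕ) (x : ℕ → ℕ → ℂ) (k : ℕ → ℕ → Fin 3)
    (hpath : ∀ j, ∀ s < n j, x j (s + 1) - x j s = (δ j : ℂ) * triTau ^ (k j s : ℕ))
    (hz : Tendsto (fun j => x j 0) atTop (nhds z))
    (hy : Tendsto (fun j => x j (n j)) atTop (nhds y)) :
    Tendsto
      (fun j =>
        (∏ s ∈ Finset.range (n j), (1 + c (k j s) * δ j) / (∑ i : Fin 3, (1 + c i * δ j)))
          / (((∏ i : Fin 3, (1 + c i * δ j)) ^ ((1 : ℝ) / 3)
                / (∑ i : Fin 3, (1 + c i * δ j))) ^ (n j)))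
      atTop
      (nhds (Real.exp (2 * cinner (y - z)
        (((c 0 : ℂ) + (c 1 : ℂ) * triTau + (c 2 : ℂ) * triTau ^ 2) / 3)))) :=
  drifted_massive_RN_limit_general c z y δ hδ0 hpos n x k hpath hz hy
end

section
/- The near-critical mass on the triangular lattice converges to the modulus of the drift (Lemma 2.8 of the paper): Let c₁, c₂, c₃ ∈ ℝ and Δ = (c₁ + c₂·τ + c₃·τ²)/3 ∈ ℂ. Then lim_{δ → 0⁺} δ^{−2}·(1 − 3·((1 + c₁δ)(1 + c₂δ)(1 + c₃δ))^{1/3}/(3 + (c₁ + c₂ + c₃)·δ)) = |Δ|². Equivalently, the mass m = m(δ) ≥ 0 defined for small δ > 0 by (1/3)·(1 − m²δ²) = ((1 + c₁δ)(1 + c₂δ)(1 + c₃δ))^{1/3}/(3 + (c₁ + c₂ + c₃)δ) converges to |Δ| as δ → 0. -/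
open Filter Topology

/-!
Write `xᵢ = 1 + cᵢδ`, `a = x₁ + x₂ + x₃ = 3 + (c₁ + c₂ + c₃)δ` and `q = (x₁x₂x₃)^{1/3}`.
Factoring the difference of cubes gives `1 - 3q/a = (a³ - 27q³) / (a(a² + 3aq + 9q²))`, and
`a³ - 27 x₁x₂x₃` is a polynomial in `δ` whose constant and linear terms vanish, with
`δ²`-coefficient `9(c₁² + c₂² + c₃² - c₁c₂ - c₂c₃ - c₃c₁)`. Dividing by `δ²` and letting
`δ → 0` (so `a, q → 1`) yields `(c₁² + c₂² + c₃² - c₁c₂ - c₂c₃ - c₃c₁)/9`, which is `|Δ|²`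
since `τ = -1/2 + (√3/2)i`.
-/

lemma triTau_eq_exp_ofReal_mul_I :
    triTau = Complex.exp ((2 * Real.pi / 3 : ℝ) * Complex.I) := by
  rw [triTau]; push_cast; ring_nf

lemma triTau_re : triTau.re = -(1 / 2) := by
  rw [triTau_eq_exp_ofReal_mul_I, Complex.exp_ofReal_mul_I_re,
    show 2 * Real.pi / 3 = Real.pi - Real.pi / 3 by ring, Real.cos_pi_sub, Real.cos_pi_div_three]

lemma triTau_im : triTau.im = √3 / 2 := by
  rw [triTau_eq_exp_ofReal_mul_I, Complex.exp_ofReal_mul_I_im,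
    show 2 * Real.pi / 3 = Real.pi - Real.pi / 3 by ring, Real.sin_pi_sub, Real.sin_pi_div_three]

lemma normSq_add_mul_triTau_add_mul_triTau_sq (a b c : ℝ) :
    Complex.normSq (a + b * triTau + c * triTau ^ 2)
      = a ^ 2 + b ^ 2 + c ^ 2 - a * b - b * c - c * a := by
  have h3 : √3 ^ 2 = 3 := Real.sq_sqrt (by norm_num)
  simp only [Complex.normSq_apply, pow_two, Complex.add_re, Complex.add_im, Complex.mul_re,
    Complex.mul_im, Complex.ofReal_re, Complex.ofReal_im, triTau_re, triTau_im]
  linear_combination (c ^ 2 * (√3 ^ 2 + 5) / 16 - a * c / 2 + b ^ 2 / 4 - b * c / 4) * h3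

lemma inv_sq_mul_one_sub_three_mul_div_eq {a q t N : ℝ} (ht : t ≠ 0) (ha : a ≠ 0)
    (h : a ^ 3 - 27 * q ^ 3 = t ^ 2 * N) :
    (t ^ 2)⁻¹ * (1 - 3 * q / a) = N / (a * (a ^ 2 + 3 * a * q + 9 * q ^ 2)) := by
  have hD : a ^ 2 + 3 * a * q + 9 * q ^ 2 ≠ 0 := by
    nlinarith [sq_pos_of_ne_zero ha, sq_nonneg (a / 2 + 3 * q)]
  rw [eq_div_iff (mul_ne_zero ha hD), ← mul_left_inj' (pow_ne_zero 2 ht)]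
  field_simp
  linear_combination h

/-- **The near-critical mass on the triangular lattice converges to the modulus of the
drift** (Lemma 2.8): with `Δ = (c₁ + c₂τ + c₃τ²)/3`, one has
`δ⁻²·(1 - 3·((1+c₁δ)(1+c₂δ)(1+c₃δ))^{1/3}/(3 + (c₁+c₂+c₃)δ)) → |Δ|²` as `δ → 0⁺`;
equivalently the mass `m(δ)` defined by
`(1/3)(1 - m²δ²) = ((1+c₁δ)(1+c₂δ)(1+c₃δ))^{1/3}/(3 + (c₁+c₂+c₃)δ)` converges to `|Δ|`. -/
theorem mass_tendsto_abs_drift_triangular (c₁ c₂ c₃ : ℝ) :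
    Tendsto
      (fun δ : ℝ => (δ ^ 2)⁻¹ *
        (1 - 3 * ((1 + c₁ * δ) * (1 + c₂ * δ) * (1 + c₃ * δ)) ^ ((1 : ℝ) / 3)
              / (3 + (c₁ + c₂ + c₃) * δ)))
      (nhdsWithin 0 (Set.Ioi 0))
      (nhds (‖((c₁ : ℂ) + (c₂ : ℂ) * triTau + (c₃ : ℂ) * triTau ^ 2) / 3‖ ^ 2)) := by
  set K := c₁ ^ 2 + c₂ ^ 2 + c₃ ^ 2 - c₁ * c₂ - c₂ * c₃ - c₃ * c₁
  set P : ℝ → ℝ := fun δ => (1 + c₁ * δ) * (1 + c₂ * δ) * (1 + c₃ * δ)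
  set a : ℝ → ℝ := fun δ => 3 + (c₁ + c₂ + c₃) * δ
  set q : ℝ → ℝ := fun δ => P δ ^ ((1 : ℝ) / 3)
  have hnorm : ‖((c₁ : ℂ) + c₂ * triTau + c₃ * triTau ^ 2) / 3‖ ^ 2 = K / 9 := by
    rw [norm_div, div_pow, ← Complex.normSq_eq_norm_sq, normSq_add_mul_triTau_add_mul_triTau_sq]
    norm_num [K]
  have hq0 : q 0 = 1 := by simp [q, P]
  have hlim : Tendsto (fun δ => (9 * K + ((c₁ + c₂ + c₃) ^ 3 - 27 * (c₁ * c₂ * c₃)) * δ)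
      / (a δ * (a δ ^ 2 + 3 * a δ * q δ + 9 * q δ ^ 2))) (𝓝 0) (𝓝 (K / 9)) := by
    refine (ContinuousAt.div (by fun_prop) (by fun_prop (disch := simp [P]))
      (by simp [a, hq0]; norm_num)).tendsto.mono_right (le_of_eq (congrArg 𝓝 ?_))
    simp [a, hq0]; ring
  have hP : ∀ᶠ δ in 𝓝 0, 0 < P δ := (by fun_prop : Continuous P).continuousAt.eventually_const_lt
    (by simp [P])
  have ha : ∀ᶠ δ in 𝓝 0, 0 < a δ := (by fun_prop : Continuous a).continuousAt.eventually_const_lt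
    (by simp [a])
  rw [hnorm]
  refine Tendsto.congr' ?_ (hlim.mono_left nhdsWithin_le_nhds)
  filter_upwards [self_mem_nhdsWithin, nhdsWithin_le_nhds hP, nhdsWithin_le_nhds ha]
    with δ (hδ : 0 < δ) hPδ haδ
  have hq3 : q δ ^ 3 = P δ := by
    simpa [q, one_div] using Real.rpow_inv_natCast_pow hPδ.le (n := 3) (by norm_num)
  refine (inv_sq_mul_one_sub_three_mul_div_eq hδ.ne' haδ.ne' ?_).symm
  simp only [hq3, a, P, K]
  ring
end
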